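/- arXiv:2601.21519 — 4 statements merged into one kernel-verified Lean document; each statement's English description precedes it below -/
import Mathlib

section
/- In the K-algebra A generated by r,s,t subject to r² = a, rs + sr = b, rt + tr + s² = c, st + ts = d, t² = e (char K ≠ 2), the element ξ = s² − c commutes with r, s, and t; that is, ξ is central in A. -/
/-!
If the anticommutator `s * x + x * s` commutes with `s`, then expanding
`s * (s * x + x * s) = (s * x + x * s) * s` and cancelling `s * x * s` gives `s² x = x s²`.
The relations `rs + sr = b` and `st + ts = d` make both anticommutators scalars, so `s²`
commutes with `r`, `s`, `t`, and so does `ξ = s² − c`.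
-/

theorem Commute.sq_left_of_commute_anticommutator {R : Type*} [Ring R] {s x : R}
    (h : Commute s (s * x + x * s)) : Commute (s ^ 2) x := by
  have h' : s * s * x + s * x * s = s * x * s + x * s * s := by
    simpa only [mul_add, add_mul, mul_assoc] using h.eq
  rw [add_comm, add_left_cancel_iff] at h'
  simpa only [Commute, SemiconjBy, sq, mul_assoc] using h'

theorem Commute.sq_left_of_anticommutator_eq_algebraMap {K A : Type*} [CommSemiring K]
    [Ring A] [Algebra K A] {s x : A} {k : K} (h : s * x + x * s = algebraMap K A k) :
    Commute (s ^ 2) x :=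
  Commute.sq_left_of_commute_anticommutator (h ▸ Algebra.commute_algebraMap_right k s)

theorem stmt_3_general (K : Type*) [Field K]
    (b c d : K)
    (A : Type*) [Ring A] [Algebra K A] (r s t : A)
    (h2 : r * s + s * r = algebraMap K A b)
    (h4 : s * t + t * s = algebraMap K A d) :
    let ξ : A := s ^ 2 - algebraMap K A c
    ξ * r = r * ξ ∧ ξ * s = s * ξ ∧ ξ * t = t * ξ := by
  intro ξ
  have hc : ∀ x : A, Commute (algebraMap K A c) x := Algebra.commute_algebraMap_left c
  have hr : Commute ξ r :=
    (Commute.sq_left_of_anticommutator_eq_algebraMap (add_comm (r * s) _ ▸ h2)).sub_left (hc r)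
  have hs : Commute ξ s := ((Commute.refl s).pow_left 2).sub_left (hc s)
  have ht : Commute ξ t :=
    (Commute.sq_left_of_anticommutator_eq_algebraMap h4).sub_left (hc t)
  exact ⟨hr.eq, hs.eq, ht.eq⟩

/-- In the Haile–Han algebra of a binary quartic, i.e. in any `K`-algebra with elements
`r, s, t` satisfying the five defining relations, the element `ξ = s² − c` commutes
with each of the generators `r`, `s`, `t` (hence is central in the algebra they generate). -/
theorem stmt_3 (K : Type*) [Field K] (hchar : (2 : K) ≠ 0)
    (a b c d e : K)
    (A : Type*) [Ring A] [Algebra K A] (r s t : A)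
    (h1 : r ^ 2 = algebraMap K A a)
    (h2 : r * s + s * r = algebraMap K A b)
    (h3 : r * t + t * r + s ^ 2 = algebraMap K A c)
    (h4 : s * t + t * s = algebraMap K A d)
    (h5 : t ^ 2 = algebraMap K A e) :
    let ξ : A := s ^ 2 - algebraMap K A c
    ξ * r = r * ξ ∧ ξ * s = s * ξ ∧ ξ * t = t * ξ :=
  stmt_3_general K b c d A r s t h2 h4
end

section
/- In the K-algebra A generated by r,s,t subject to r² = a, rs + sr = b, rt + tr + s² = c, st + ts = d, t² = e (char K ≠ 2), the even-degree element u = b − 2rs satisfies u² = (b² − 4ac) − 4a·ξ, where ξ = s² − c. -/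
theorem Commute.mul_mul_self_of_anticommutator {A : Type*} [Ring A] {r s : A}
    (h : Commute r (r * s + s * r)) :
    r * s * (r * s) = (r * s + s * r) * (r * s) - r ^ 2 * s ^ 2 := by
  have hsr : s * r = (r * s + s * r) - r * s := by abel
  calc r * s * (r * s) = r * (s * r) * s := by noncomm_ring
    _ = r * (r * s + s * r) * s - r ^ 2 * s ^ 2 := by rw [hsr]; noncomm_ring
    _ = (r * s + s * r) * (r * s) - r ^ 2 * s ^ 2 := by rw [h.eq, mul_assoc]

theorem sq_algebraMap_sub_two_mul_eq {R A : Type*} [CommRing R] [Ring A] [Algebra R A]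
    {a b : R} {r s : A} (h1 : r ^ 2 = algebraMap R A a)
    (h2 : r * s + s * r = algebraMap R A b) :
    (algebraMap R A b - 2 * (r * s)) ^ 2 =
      algebraMap R A (b ^ 2) - algebraMap R A (4 * a) * s ^ 2 := by
  have hr : Commute r (r * s + s * r) := h2 ▸ (Algebra.commutes b r).symm
  have key : r * s * (r * s) = algebraMap R A b * (r * s) - algebraMap R A a * s ^ 2 := by
    rw [hr.mul_mul_self_of_anticommutator, h2, h1]
  calc (algebraMap R A b - 2 * (r * s)) ^ 2
      = algebraMap R A b ^ 2 - 2 * (algebraMap R A b * (r * s))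
          - 2 * ((r * s) * algebraMap R A b) + 4 * (r * s * (r * s)) := by noncomm_ring
    _ = algebraMap R A (b ^ 2) - algebraMap R A (4 * a) * s ^ 2 := by
      rw [key, ← Algebra.commutes b (r * s), map_pow, map_mul, map_ofNat]
      noncomm_ring

theorem stmt_4_general (K : Type*) [Field K]
    (a b c : K)
    (A : Type*) [Ring A] [Algebra K A] (r s : A)
    (h1 : r ^ 2 = algebraMap K A a)
    (h2 : r * s + s * r = algebraMap K A b) :
    let ξ : A := s ^ 2 - algebraMap K A c
    (algebraMap K A b - 2 * (r * s)) ^ 2 =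
      algebraMap K A (b ^ 2 - 4 * a * c) - algebraMap K A (4 * a) * ξ := by
  intro ξ
  rw [sq_algebraMap_sub_two_mul_eq h1 h2, mul_sub, ← map_mul, map_sub, mul_assoc]
  abel

/-- In the Haile–Han algebra of a binary quartic (any `K`-algebra with elements `r, s, t`
satisfying the five defining relations), the even element `u = b − 2 r s` satisfies
`u² = (b² − 4ac) − 4a·ξ`, where `ξ = s² − c` is the central element. -/
theorem stmt_4 (K : Type*) [Field K] (hchar : (2 : K) ≠ 0)
    (a b c d e : K)
    (A : Type*) [Ring A] [Algebra K A] (r s t : A)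
    (h1 : r ^ 2 = algebraMap K A a)
    (h2 : r * s + s * r = algebraMap K A b)
    (h3 : r * t + t * r + s ^ 2 = algebraMap K A c)
    (h4 : s * t + t * s = algebraMap K A d)
    (h5 : t ^ 2 = algebraMap K A e) :
    let ξ : A := s ^ 2 - algebraMap K A c
    (algebraMap K A b - 2 * (r * s)) ^ 2 =
      algebraMap K A (b ^ 2 - 4 * a * c) - algebraMap K A (4 * a) * ξ :=
  stmt_4_general K a b c A r s h1 h2
end

section
/- Let g_α(x) = (a + c₁α² + α³)x³ + (a₂ + c₂α² + mα)x² + b₁x + b be a real cubic polynomial depending on a parameter α ∈ ℝ, where a, b, a₂, b₁, c₁, c₂, m ∈ ℝ with b ≠ 0 and b·c₂ ≥ 0. Then there exists α₀ ∈ ℝ such that for all α ≥ α₀, g_α has exactly one real root. -/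
/-!
A real cubic with positive leading coefficient has a root by the intermediate value theorem.
If it had two distinct real roots `x ≠ y`, its third root `z = -b/a - x - y` would be real too,
and then its discriminant `(a²(x - y)(x - z)(y - z))²` would be nonnegative. So a cubic with
negative discriminant has exactly one real root.

Substituting `x = y/α` turns `g_α` into a cubic `Q (1/α)` in `y` whose coefficients are
polynomials in `ε = 1/α`, and the discriminant is weighted homogeneous, so
`disc g_α = α⁶ · disc (Q (1/α))`. At `ε = 0` we get `y³ + c₂y² + b`, of discriminant
`-(27b² + 4bc₂³) < 0` because `b ≠ 0` and `bc₂ ≥ 0`; by continuity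
`disc (Q ε) < 0` for small `ε`.
-/

open Filter Polynomial Topology

namespace Cubic

theorem discr_rescale {R : Type*} [CommRing R] (a b c d t : R) :
    (⟨a * t ^ 3, b * t ^ 2, c * t, d⟩ : Cubic R).discr =
      t ^ 6 * (⟨a, b, c, d⟩ : Cubic R).discr := by
  simp only [discr]
  ring

theorem discr_nonneg_of_eval_eq_zero {K : Type*} [Field K] [LinearOrder K] [IsStrictOrderedRing K]
    {P : Cubic K} (ha : P.a ≠ 0) {x y : K} (hxy : x ≠ y) (hx : P.toPoly.eval x = 0)
    (hy : P.toPoly.eval y = 0) : 0 ≤ P.discr := by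
  obtain ⟨a, b, c, d⟩ := P
  simp only [toPoly, eval_add, eval_mul, eval_C, eval_pow, eval_X] at ha hx hy
  obtain ⟨z, rfl⟩ : ∃ z, b = -a * (x + y + z) := ⟨-b / a - x - y, by field_simp; ring⟩
  have hc : c = a * (x * y + y * z + z * x) := by
    have h : (x - y) * (a * (x ^ 2 + x * y + y ^ 2) - a * (x + y + z) * (x + y) + c) = 0 := by
      linear_combination hx - hy
    linear_combination (mul_eq_zero.1 h).resolve_left (sub_ne_zero.2 hxy)
  subst hc
  obtain rfl : d = -a * x * y * z := by linear_combination hx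
  have h : discr ⟨a, -a * (x + y + z), a * (x * y + y * z + z * x), -a * x * y * z⟩ =
      (a ^ 2 * (x - y) * (x - z) * (y - z)) ^ 2 := by
    simp only [discr]
    ring
  rw [h]
  positivity

theorem tendsto_eval_atTop {P : Cubic ℝ} (ha : 0 < P.a) :
    Tendsto (fun x ↦ P.toPoly.eval x) atTop atTop :=
  P.toPoly.tendsto_atTop_of_leadingCoeff_nonneg (by rw [degree_of_a_ne_zero ha.ne']; norm_num)
    (by rw [leadingCoeff_of_a_ne_zero ha.ne']; exact ha.le)

theorem tendsto_eval_atBot {P : Cubic ℝ} (ha : 0 < P.a) :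
    Tendsto (fun x ↦ P.toPoly.eval x) atBot atBot := by
  have h := tendsto_neg_atTop_atBot.comp
    ((tendsto_eval_atTop (P := ⟨P.a, -P.b, P.c, -P.d⟩) ha).comp tendsto_neg_atBot_atTop)
  convert h using 1
  ext x
  simp only [toPoly, Function.comp_apply, eval_add, eval_mul, eval_C, eval_pow, eval_X]
  ring

theorem existsUnique_eval_eq_zero_of_discr_neg {P : Cubic ℝ} (ha : 0 < P.a) (hd : P.discr < 0) :
    ∃! x, P.toPoly.eval x = 0 := by
  obtain ⟨x, hx⟩ :=
    P.toPoly.continuous.surjective (tendsto_eval_atTop ha) (tendsto_eval_atBot ha) 0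
  exact ⟨x, hx, fun y hy ↦ by_contra fun hyx ↦
    hd.not_ge (discr_nonneg_of_eval_eq_zero ha.ne' hyx hy hx)⟩

end Cubic

/-- For the family of real cubics
`g_α(x) = (a + c₁α² + α³)x³ + (a₂ + c₂α² + mα)x² + b₁x + b` with `b ≠ 0` and `b·c₂ ≥ 0`,
there is an `α₀ ∈ ℝ` such that for every `α ≥ α₀` the cubic `g_α` has exactly one real
root. -/
theorem stmt_6 (a b a₂ b₁ c₁ c₂ m : ℝ) (hb : b ≠ 0) (hbc : b * c₂ ≥ 0) :
    ∃ α₀ : ℝ, ∀ α : ℝ, α₀ ≤ α →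
      ∃! x : ℝ,
        (a + c₁ * α ^ 2 + α ^ 3) * x ^ 3 + (a₂ + c₂ * α ^ 2 + m * α) * x ^ 2
          + b₁ * x + b = 0 := by
  set Q : ℝ → Cubic ℝ := fun ε ↦
    ⟨1 + c₁ * ε + a * ε ^ 3, c₂ + m * ε + a₂ * ε ^ 2, b₁ * ε, b⟩
  have hdiscr₀ : (Q 0).discr < 0 := by
    have h : (Q 0).discr = -(27 * b ^ 2 + 4 * (b * c₂) * c₂ ^ 2) := by
      simp only [Q, Cubic.discr]
      ring
    rw [h]
    nlinarith [sq_pos_of_ne_zero hb, mul_nonneg hbc (sq_nonneg c₂)]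
  have hlim {f : Cubic ℝ → ℝ} (hf : Continuous fun ε ↦ f (Q ε)) :
      Tendsto (fun α : ℝ ↦ f (Q α⁻¹)) atTop (𝓝 (f (Q 0))) :=
    (hf.tendsto 0).comp tendsto_inv_atTop_zero
  obtain ⟨α₀, hα₀⟩ := eventually_atTop.1 <| (eventually_gt_atTop 0).and <|
    ((hlim (f := Cubic.a) (by simp only [Q]; fun_prop)).eventually_const_lt
      (by simp [Q] : (0 : ℝ) < (Q 0).a)).and
    ((hlim (f := Cubic.discr) (by simp only [Q, Cubic.discr]; fun_prop)).eventually_lt_const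
      hdiscr₀)
  refine ⟨α₀, fun α hα ↦ ?_⟩
  obtain ⟨hα_pos, hQa, hQdiscr⟩ := hα₀ α hα
  have hP : (⟨a + c₁ * α ^ 2 + α ^ 3, a₂ + c₂ * α ^ 2 + m * α, b₁, b⟩ : Cubic ℝ) =
      ⟨(Q α⁻¹).a * α ^ 3, (Q α⁻¹).b * α ^ 2, (Q α⁻¹).c * α, (Q α⁻¹).d⟩ := by
    ext <;> simp only [Q] <;> field_simp <;> ring
  have h := Cubic.existsUnique_eval_eq_zero_of_discr_neg
    (P := ⟨a + c₁ * α ^ 2 + α ^ 3, a₂ + c₂ * α ^ 2 + m * α, b₁, b⟩)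
    (by rw [hP]; positivity)
    (by rw [hP, Cubic.discr_rescale]; exact mul_neg_of_pos_of_neg (by positivity) hQdiscr)
  simpa [Cubic.toPoly] using h
end

section
/- Let E and F be abelian group objects (abelian varieties) with a common finite subgroup Δ embedded diagonally in E × F, let A = (E × F)/Δ, E' = A/F, F' = A/E, and let φ: E → E' and ψ: F → F' be the induced isogenies with kernel Δ. Then (abstract group-theoretic version) for G-modules: if 0 → E → A → F' → 0 is exact and φ factors as E → A → E' with ker φ = Δ, and if E'(K)/φE(K) = 0, then the natural map F'(K)/ψF(K) → ker(H¹(K,E) → H¹(K,A)) is an isomorphism. -/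
/-!
The lift of `y ∈ F'^G` to `a ∈ A` gives the cocycle `g ↦ g • a - a` with values in `E`; changing
the lift by `e ∈ E` changes the cocycle by the coboundary of `e`. So the cocycle is a coboundary
exactly when `y` has a `G`-invariant lift `b`, and the hypothesis `E'^G = φ(E^G)` lets one
subtract an invariant element of `E` from `b` to land in the invariant part of `F`.
-/

open Function

section Equivariant

variable {G E A : Type*} [Group G] [AddCommGroup E] [AddCommGroup A]
  [DistribMulAction G E] [DistribMulAction G A] {ι : E →+ A}

theorem cocycle_of_map_eq_coboundary (hι : ∀ (g : G) (x : E), ι (g • x) = g • ι x)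
    (hinj : Injective ι) {f : G → E} {a : A} (hf : ∀ g, ι (f g) = g • a - a) (g h : G) :
    f (g * h) = f g + g • f h := by
  apply hinj
  rw [map_add, hf, hι, hf, hf, mul_smul, smul_sub]
  abel

theorem map_eq_coboundary_iff_smul_sub_eq (hι : ∀ (g : G) (x : E), ι (g • x) = g • ι x)
    (hinj : Injective ι) {f : G → E} {a : A} (hf : ∀ g, ι (f g) = g • a - a) (e : E) :
    (∀ g, f g = g • e - e) ↔ ∀ g : G, g • (a - ι e) = a - ι e := by
  refine forall_congr' fun g => ?_
  rw [← hinj.eq_iff, hf, map_sub, hι, smul_sub]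
  constructor <;> intro h
  · rw [sub_eq_iff_eq_add.mp h]; abel
  · rw [← sub_eq_zero] at h ⊢; rw [← h]; abel

end Equivariant

theorem smul_map_eq_iff_exists_map_eq {G E A F' : Type*} [Group G] [AddCommGroup E]
    [AddCommGroup A] [AddCommGroup F'] [DistribMulAction G A] [DistribMulAction G F']
    {ι : E →+ A} {pr : A →+ F'} (hpr : ∀ (g : G) (x : A), pr (g • x) = g • pr x)
    (hexact : ∀ x : A, pr x = 0 ↔ ∃ e : E, ι e = x) (g : G) (a : A) :
    g • pr a = pr a ↔ ∃ e, ι e = g • a - a := by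
  rw [← hexact, map_sub, hpr, sub_eq_zero]

theorem exists_add_eq_of_smul_eq_self {G E F A E' : Type*} [Group G] [AddCommGroup E]
    [AddCommGroup F] [AddCommGroup A] [AddCommGroup E'] [DistribMulAction G E]
    [DistribMulAction G F] [DistribMulAction G A] [DistribMulAction G E']
    {ιE : E →+ A} {ιF : F →+ A} {prE : A →+ E'}
    (hιE : ∀ (g : G) (x : E), ιE (g • x) = g • ιE x)
    (hιF : ∀ (g : G) (x : F), ιF (g • x) = g • ιF x)
    (hprE : ∀ (g : G) (x : A), prE (g • x) = g • prE x)
    (hιFinj : Injective ιF) (hexact : ∀ x : A, prE x = 0 ↔ ∃ y : F, ιF y = x)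
    (hsurj : ∀ e' : E', (∀ g : G, g • e' = e') →
      ∃ e : E, (∀ g : G, g • e = e) ∧ prE (ιE e) = e')
    {b : A} (hb : ∀ g : G, g • b = b) :
    ∃ e : E, ∃ x : F, (∀ g : G, g • x = x) ∧ ιE e + ιF x = b := by
  obtain ⟨e, he_inv, he⟩ := hsurj (prE b) fun g => by rw [← hprE, hb]
  obtain ⟨x, hx⟩ := (hexact (b - ιE e)).mp (by rw [map_sub, he, sub_self])
  refine ⟨e, x, fun g => hιFinj ?_, by rw [hx]; abel⟩
  rw [hιF, hx, smul_sub, hb, ← hιE, he_inv]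

theorem stmt_17_general (G E A F E' F' : Type*) [Group G]
    [AddCommGroup E] [AddCommGroup A] [AddCommGroup F]
    [AddCommGroup E'] [AddCommGroup F']
    [DistribMulAction G E] [DistribMulAction G A] [DistribMulAction G F]
    [DistribMulAction G E'] [DistribMulAction G F']
    (ιE : E →+ A) (pr : A →+ F') (ιF : F →+ A) (prE : A →+ E')
    (hιEG : ∀ (g : G) (x : E), ιE (g • x) = g • ιE x)
    (hprG : ∀ (g : G) (x : A), pr (g • x) = g • pr x)
    (hιFG : ∀ (g : G) (x : F), ιF (g • x) = g • ιF x)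
    (hprEG : ∀ (g : G) (x : A), prE (g • x) = g • prE x)
    (hιEinj : Function.Injective ιE)
    (hrow : ∀ x : A, pr x = 0 ↔ ∃ e : E, ιE e = x)
    (hιFinj : Function.Injective ιF)
    (hcol : ∀ x : A, prE x = 0 ↔ ∃ y : F, ιF y = x)
    -- hypothesis `E'(K)/φE(K) = 0`, i.e. `E'^G = φ(E^G)` where `φ = prE ∘ ιE`
    (hE' : ∀ e' : E', (∀ g : G, g • e' = e') →
      ∃ e : E, (∀ g : G, g • e = e) ∧ prE (ιE e) = e') :
    -- (1) well-definedness of the map `F'^G → Vis_A H¹(G,E)`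
    (∀ y : F', (∀ g : G, g • y = y) → ∀ a : A, pr a = y →
      ∃ f : G → E, (∀ g : G, ιE (f g) = g • a - a) ∧
        ∀ g h : G, f (g * h) = f g + g • f h) ∧
    -- (2) injectivity: the cocycle attached to `y` is a coboundary in `E`
    --     iff `y` lies in `ψ(F^G)`, where `ψ = pr ∘ ιF`
    (∀ y : F', (∀ g : G, g • y = y) → ∀ a : A, pr a = y →
      ∀ f : G → E, (∀ g : G, ιE (f g) = g • a - a) →
        ((∃ e : E, ∀ g : G, f g = g • e - e) ↔
          ∃ x : F, (∀ g : G, g • x = x) ∧ pr (ιF x) = y)) ∧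
    -- (3) surjectivity onto `ker(H¹(G,E) → H¹(G,A))`
    (∀ f : G → E, (∀ g h : G, f (g * h) = f g + g • f h) →
      (∃ a : A, ∀ g : G, ιE (f g) = g • a - a) →
        ∃ y : F', (∀ g : G, g • y = y) ∧
          ∃ a : A, pr a = y ∧ ∀ g : G, ιE (f g) = g • a - a) := by
  have hprιE : ∀ e : E, pr (ιE e) = 0 := fun e => (hrow (ιE e)).mpr ⟨e, rfl⟩
  refine ⟨fun y hy a ha => ?_, fun y hy a ha f hf => ⟨?_, ?_⟩, ?_⟩
  · choose f hf using fun g => (smul_map_eq_iff_exists_map_eq hprG hrow g a).mp (ha ▸ hy g)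
    exact ⟨f, hf, cocycle_of_map_eq_coboundary hιEG hιEinj hf⟩
  · rintro ⟨e, he⟩
    have hb := (map_eq_coboundary_iff_smul_sub_eq hιEG hιEinj hf e).mp he
    obtain ⟨e₀, x, hx, hsum⟩ := exists_add_eq_of_smul_eq_self hιEG hιFG hprEG hιFinj hcol hE' hb
    refine ⟨x, hx, ?_⟩
    rw [← ha, ← sub_add_cancel a (ιE e), ← hsum]
    rw [map_add, map_add, hprιE, hprιE, zero_add, add_zero]
  · rintro ⟨x, hx, hxy⟩
    obtain ⟨e, he⟩ := (hrow (a - ιF x)).mp (by rw [map_sub, ha, hxy, sub_self])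
    refine ⟨e, (map_eq_coboundary_iff_smul_sub_eq hιEG hιEinj hf e).mpr fun g => ?_⟩
    rw [he, sub_sub_cancel, ← hιFG, hx]
  · rintro f - ⟨a, hf⟩
    exact ⟨pr a, fun g => (smul_map_eq_iff_exists_map_eq hprG hrow g a).mpr ⟨f g, hf g⟩,
      a, rfl, hf⟩

/-- Fisher's Lemma 2.1 in the language of `G`-modules.  Given a commutative diagram of
`G`-modules with exact row `0 → E →^{ιE} A →^{pr} F' → 0` and exact column
`0 → F →^{ιF} A →^{prE} E' → 0`, and diagonal isogenies `φ = prE ∘ ιE : E → E'` and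
`ψ = pr ∘ ιF : F → F'`, suppose `E'^G = φ(E^G)`.  Then the natural map
`F'^G/ψ(F^G) → Vis_A H¹(G,E) := ker(H¹(G,E) → H¹(G,A))` is an isomorphism.  This is
stated at the level of `1`-cocycles: (1) each invariant `y ∈ F'^G`, via a lift `a ∈ A`,
determines a `1`-cocycle of `E` whose image in `A` is the coboundary of `a`;
(2) this cocycle is a coboundary in `E` iff `y ∈ ψ(F^G)` (injectivity);
(3) every `1`-cocycle of `E` that becomes a coboundary in `A` arises this way
(surjectivity onto the visible subgroup). -/
theorem stmt_17 (G E A F E' F' : Type*) [Group G]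
    [AddCommGroup E] [AddCommGroup A] [AddCommGroup F]
    [AddCommGroup E'] [AddCommGroup F']
    [DistribMulAction G E] [DistribMulAction G A] [DistribMulAction G F]
    [DistribMulAction G E'] [DistribMulAction G F']
    (ιE : E →+ A) (pr : A →+ F') (ιF : F →+ A) (prE : A →+ E')
    (hιEG : ∀ (g : G) (x : E), ιE (g • x) = g • ιE x)
    (hprG : ∀ (g : G) (x : A), pr (g • x) = g • pr x)
    (hιFG : ∀ (g : G) (x : F), ιF (g • x) = g • ιF x)
    (hprEG : ∀ (g : G) (x : A), prE (g • x) = g • prE x)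
    (hιEinj : Function.Injective ιE) (hprsurj : Function.Surjective pr)
    (hrow : ∀ x : A, pr x = 0 ↔ ∃ e : E, ιE e = x)
    (hιFinj : Function.Injective ιF) (hprEsurj : Function.Surjective prE)
    (hcol : ∀ x : A, prE x = 0 ↔ ∃ y : F, ιF y = x)
    -- hypothesis `E'(K)/φE(K) = 0`, i.e. `E'^G = φ(E^G)` where `φ = prE ∘ ιE`
    (hE' : ∀ e' : E', (∀ g : G, g • e' = e') →
      ∃ e : E, (∀ g : G, g • e = e) ∧ prE (ιE e) = e') :
    -- (1) well-definedness of the map `F'^G → Vis_A H¹(G,E)`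
    (∀ y : F', (∀ g : G, g • y = y) → ∀ a : A, pr a = y →
      ∃ f : G → E, (∀ g : G, ιE (f g) = g • a - a) ∧
        ∀ g h : G, f (g * h) = f g + g • f h) ∧
    -- (2) injectivity: the cocycle attached to `y` is a coboundary in `E`
    --     iff `y` lies in `ψ(F^G)`, where `ψ = pr ∘ ιF`
    (∀ y : F', (∀ g : G, g • y = y) → ∀ a : A, pr a = y →
      ∀ f : G → E, (∀ g : G, ιE (f g) = g • a - a) →
        ((∃ e : E, ∀ g : G, f g = g • e - e) ↔
          ∃ x : F, (∀ g : G, g • x = x) ∧ pr (ιF x) = y)) ∧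
    -- (3) surjectivity onto `ker(H¹(G,E) → H¹(G,A))`
    (∀ f : G → E, (∀ g h : G, f (g * h) = f g + g • f h) →
      (∃ a : A, ∀ g : G, ιE (f g) = g • a - a) →
        ∃ y : F', (∀ g : G, g • y = y) ∧
          ∃ a : A, pr a = y ∧ ∀ g : G, ιE (f g) = g • a - a) :=
  stmt_17_general G E A F E' F' ιE pr ιF prE hιEG hprG hιFG hprEG hιEinj hrow hιFinj hcol hE'
end
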